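/- Let f(x) = x − ⌊x⌋ − 1/2 and let q₁, q₂ be positive integers. Then ∫₀¹ f(q₁u) f(q₂u) du = gcd(q₁,q₂)² / (12 q₁ q₂). -/

import Mathlib

open MeasureTheory intervalIntegral Finset

/-- The sawtooth function `f(x) = x − ⌊x⌋ − 1/2`. -/
noncomputable def sawtooth (x : ℝ) : ℝ := Int.fract x - 1 / 2

lemma sawtooth_add_int (x : ℝ) (n : ℤ) : sawtooth (x + n) = sawtooth x := by
  simp [sawtooth, Int.fract_add_intCast]

lemma sawtooth_periodic : Function.Periodic sawtooth 1 := by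
  intro x
  simpa using sawtooth_add_int x 1

lemma measurable_sawtooth : Measurable sawtooth :=
  measurable_fract.sub measurable_const

lemma abs_sawtooth_le (x : ℝ) : |sawtooth x| ≤ 1 / 2 := by
  have h1 := Int.fract_nonneg x
  have h2 := Int.fract_lt_one x
  rw [abs_le]
  constructor <;> simp only [sawtooth] <;> linarith

lemma sawtooth_intervalIntegrable (c d e k A B : ℝ) :
    IntervalIntegrable (fun u => sawtooth (c * u + d) * sawtooth (e * u + k)) volume A B := by
  have hm : Measurable fun u : ℝ => sawtooth (c * u + d) * sawtooth (e * u + k) :=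
    (measurable_sawtooth.comp ((measurable_id.const_mul c).add_const d)).mul
      (measurable_sawtooth.comp ((measurable_id.const_mul e).add_const k))
  rw [intervalIntegrable_iff]
  refine Measure.integrableOn_of_bounded (M := 1) ?_ hm.aestronglyMeasurable ?_
  · exact ((measure_Ioc_lt_top (a := min A B) (b := max A B)).trans_le le_top).ne
  · refine ae_of_all _ fun x => ?_
    rw [Real.norm_eq_abs, abs_mul]
    calc |sawtooth (c * x + d)| * |sawtooth (e * x + k)| ≤ (1/2) * (1/2) :=
          mul_le_mul (abs_sawtooth_le _) (abs_sawtooth_le _) (abs_nonneg _) (by norm_num)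
      _ ≤ 1 := by norm_num

lemma sum_range_real (n : ℕ) : ∑ k ∈ Finset.range n, (k : ℝ) = n * (n - 1) / 2 := by
  induction n with
  | zero => simp
  | succ m ih =>
    rw [Finset.sum_range_succ, ih]
    push_cast
    ring

lemma sawtooth_dist (n : ℕ) (hn : 0 < n) (x : ℝ) :
    ∑ k ∈ Finset.range n, sawtooth ((x + k) / n) = sawtooth x := by
  have hn' : (n : ℝ) ≠ 0 := Nat.cast_ne_zero.mpr hn.ne'
  set S : ℝ → ℝ := fun y => ∑ k ∈ Finset.range n, sawtooth ((y + k) / n) with hS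
  have hper : Function.Periodic S 1 := by
    intro y
    have key : ∀ k ∈ Finset.range n,
        sawtooth ((y + 1 + k) / n) = sawtooth ((y + (k + 1 : ℕ)) / n) := by
      intro k _; push_cast; ring_nf
    have h3 : sawtooth ((y + (n : ℕ)) / n) = sawtooth ((y + (0 : ℕ)) / n) := by
      have he : (y + (n : ℝ)) / n = y / n + (1 : ℤ) := by field_simp; simp
      rw [Nat.cast_zero, add_zero, he, sawtooth_add_int]
    have h1 := Finset.sum_range_succ' (fun k => sawtooth ((y + k) / n)) n
    have h2 := Finset.sum_range_succ (fun k => sawtooth ((y + k) / n)) n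
    have : S (y + 1) = ∑ k ∈ Finset.range n, sawtooth ((y + (k + 1 : ℕ)) / n) :=
      Finset.sum_congr rfl key
    rw [this]
    simp only [hS]
    rw [Nat.cast_zero, add_zero] at h1
    rw [h3, Nat.cast_zero, add_zero] at h2
    linarith [h1, h2]
  have base : ∀ y : ℝ, 0 ≤ y → y < 1 → S y = sawtooth y := by
    intro y h0 h1
    have hfr : ∀ k ∈ Finset.range n, sawtooth ((y + k) / n) = (y + k) / n - 1 / 2 := by
      intro k hk
      have hk' : (k : ℝ) ≤ (n : ℝ) - 1 := by
        have : (k : ℝ) + 1 ≤ n := by exact_mod_cast Finset.mem_range.mp hk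
        linarith
      have hnn : (0 : ℝ) < n := by positivity
      have hfe : Int.fract ((y + k) / n) = (y + k) / n := by
        rw [Int.fract_eq_self]
        constructor
        · positivity
        · rw [div_lt_one hnn]; linarith
      simp [sawtooth, hfe]
    rw [hS]
    simp only []
    rw [Finset.sum_congr rfl hfr]
    have hsum : ∑ k ∈ Finset.range n, ((y + k) / n - 1 / 2)
        = (n * y + n * (n - 1) / 2) / n - n * (1 / 2) := by
      rw [Finset.sum_sub_distrib, ← Finset.sum_div, Finset.sum_add_distrib,
        Finset.sum_const, Finset.card_range, sum_range_real, Finset.sum_const,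
        Finset.card_range, nsmul_eq_mul, nsmul_eq_mul]
    rw [hsum, sawtooth, Int.fract_eq_self.mpr ⟨h0, h1⟩]
    field_simp
    ring
  have hx : S x = S (Int.fract x) := by
    have := hper.sub_int_mul_eq (x := x) (n := ⌊x⌋)
    rw [mul_one] at this
    rw [← this, Int.self_sub_floor]
  show S x = sawtooth x
  rw [hx, base _ (Int.fract_nonneg x) (Int.fract_lt_one x)]
  simp [sawtooth, Int.fract_fract]

lemma sawtooth_mod_congr {a : ℕ} (ha : 0 < a) (y : ℝ) {m m' : ℕ} (h : m % a = m' % a) :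
    sawtooth ((y + m) / a) = sawtooth ((y + m') / a) := by
  have ha' : (a : ℝ) ≠ 0 := Nat.cast_ne_zero.mpr ha.ne'
  obtain ⟨t, ht⟩ := Nat.ModEq.dvd (h : Nat.ModEq a m m')
  have hr : (m' : ℝ) = m + a * t := by
    have : ((m' : ℤ) : ℝ) = ((m : ℤ) : ℝ) + ((a : ℤ) : ℝ) * ((t : ℤ) : ℝ) := by
      have h2 : (m' : ℤ) = m + a * t := by linarith [ht]
      exact_mod_cast congrArg (fun z : ℤ => (z : ℝ)) h2
    push_cast at this ⊢
    linarith
  have harg : (y + m') / a = (y + m) / a + (t : ℤ) := by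
    rw [hr]; push_cast; field_simp; ring
  rw [harg, sawtooth_add_int]

lemma sum_sawtooth_bmul (a b : ℕ) (ha : 0 < a) (hab : Nat.Coprime b a) (y : ℝ) :
    ∑ k ∈ Finset.range a, sawtooth ((y + (b * k : ℕ)) / a)
      = ∑ k ∈ Finset.range a, sawtooth ((y + k) / a) := by
  haveI : NeZero a := ⟨ha.ne'⟩
  set H : ZMod a → ℝ := fun z => sawtooth ((y + z.val) / a) with hH
  have hrange : ∀ G : ZMod a → ℝ, ∑ k ∈ Finset.range a, G k = ∑ z : ZMod a, G z := by
    intro G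
    refine Finset.sum_nbij' (fun k => (k : ZMod a)) (fun z => z.val) ?_ ?_ ?_ ?_ ?_
    · intro k _; exact Finset.mem_univ _
    · intro z _; exact Finset.mem_range.mpr z.val_lt
    · intro k hk; simp [ZMod.val_natCast, Nat.mod_eq_of_lt (Finset.mem_range.mp hk)]
    · intro z _; exact ZMod.natCast_zmod_val z
    · intro k _; rfl
  have step1 : ∀ k ∈ Finset.range a,
      sawtooth ((y + (b * k : ℕ)) / a) = H ((b : ZMod a) * (k : ZMod a)) := by
    intro k _
    have hc : ((b : ZMod a) * (k : ZMod a)) = ((b * k : ℕ) : ZMod a) := by push_cast; ring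
    rw [hH]
    simp only [hc, ZMod.val_natCast]
    exact sawtooth_mod_congr ha y (Nat.mod_mod_of_dvd _ dvd_rfl).symm
  have step3 : ∀ k ∈ Finset.range a, H ((k : ℕ) : ZMod a) = sawtooth ((y + k) / a) := by
    intro k hk
    rw [hH]
    simp only [ZMod.val_natCast, Nat.mod_eq_of_lt (Finset.mem_range.mp hk)]
  calc ∑ k ∈ Finset.range a, sawtooth ((y + (b * k : ℕ)) / a)
      = ∑ k ∈ Finset.range a, (fun z => H ((b : ZMod a) * z)) ((k : ℕ) : ZMod a) :=
        Finset.sum_congr rfl step1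
    _ = ∑ z : ZMod a, (fun z => H ((b : ZMod a) * z)) z := hrange (fun z => H ((b : ZMod a) * z))
    _ = ∑ z : ZMod a, H ((b : ZMod a) * z) := rfl
    _ = ∑ z : ZMod a, H z := by
        have := Equiv.sum_comp (Units.mulLeft (ZMod.unitOfCoprime b hab)) H
        simpa [ZMod.coe_unitOfCoprime] using this
    _ = ∑ k ∈ Finset.range a, H ((k : ℕ) : ZMod a) := (hrange H).symm
    _ = ∑ k ∈ Finset.range a, sawtooth ((y + k) / a) := Finset.sum_congr rfl step3

lemma coprime_reduce (a b : ℕ) (ha : 0 < a) (hab : Nat.Coprime b a) :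
    ∫ u in (0:ℝ)..1, sawtooth (a * u) * sawtooth (b * u)
      = (1 / a) * ∫ u in (0:ℝ)..1, sawtooth u * sawtooth (b * u) := by
  have haR : (a : ℝ) ≠ 0 := Nat.cast_ne_zero.mpr ha.ne'
  set g : ℝ → ℝ := fun u => sawtooth ((a : ℝ) * u) * sawtooth ((b : ℝ) * u) with hg
  have hint : ∀ A B : ℝ, IntervalIntegrable g volume A B := fun A B => by
    simpa [hg] using sawtooth_intervalIntegrable a 0 b 0 A B
  have hsplit : (∫ u in (0:ℝ)..1, g u)
      = ∑ k ∈ Finset.range a, ∫ u in ((k : ℝ)/a)..(((k+1 : ℕ) : ℝ)/a), g u := by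
    have := intervalIntegral.sum_integral_adjacent_intervals
      (a := fun k : ℕ => (k : ℝ)/a) (f := g) (μ := volume) (n := a)
      (fun k _ => hint _ _)
    rw [this]
    norm_num [haR]
  have hcomp : ∀ k : ℕ, ∀ t : ℝ,
      g ((t + k) / a) = sawtooth t * sawtooth (((b:ℝ) * t + ((b*k : ℕ) : ℝ)) / a) := by
    intro k t
    have e1 : (a : ℝ) * ((t + k)/a) = t + ((k : ℤ) : ℝ) := by push_cast; field_simp
    have e2 : (b : ℝ) * ((t + k)/a) = ((b:ℝ) * t + ((b*k : ℕ) : ℝ)) / a := by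
      push_cast; field_simp
    rw [hg]
    simp only [e1, e2, sawtooth_add_int]
  have piece : ∀ k : ℕ, (∫ u in ((k : ℝ)/a)..(((k+1 : ℕ) : ℝ)/a), g u)
      = (1/(a:ℝ)) * ∫ t in (0:ℝ)..1, sawtooth t * sawtooth (((b:ℝ) * t + ((b*k:ℕ):ℝ)) / a) := by
    intro k
    have h2 : (∫ t in ((k:ℝ))..((k:ℝ)+1), g (t/a))
        = (a:ℝ) • ∫ x in ((k:ℝ)/a)..(((k:ℝ)+1)/a), g x :=
      intervalIntegral.integral_comp_div (a := (k:ℝ)) (b := (k:ℝ)+1) (f := g) haR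
    have h1 : (∫ t in (0:ℝ)..1, g ((t + k)/a)) = ∫ t in ((k:ℝ))..((k:ℝ)+1), g (t/a) := by
      have := intervalIntegral.integral_comp_add_right (a := (0:ℝ)) (b := 1)
        (f := fun t => g (t/a)) (k : ℝ)
      simpa [add_comm] using this
    have h3 : (∫ u in ((k : ℝ)/a)..(((k+1 : ℕ) : ℝ)/a), g u)
        = (1/(a:ℝ)) * ∫ t in (0:ℝ)..1, g ((t + k)/a) := by
      rw [h1, h2]
      push_cast
      field_simp
      exact (smul_eq_mul _ _).symm
    rw [h3]
    congr 1
    exact intervalIntegral.integral_congr fun t _ => hcomp k t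
  have hintk : ∀ k ∈ Finset.range a, IntervalIntegrable
      (fun t => sawtooth t * sawtooth (((b:ℝ) * t + ((b*k:ℕ):ℝ)) / a)) volume 0 1 := by
    intro k _
    have harg : ∀ t : ℝ, ((b:ℝ) * t + ((b*k:ℕ):ℝ)) / a = ((b:ℝ)/a) * t + ((b*k:ℕ):ℝ)/a := by
      intro t; field_simp
    have h := sawtooth_intervalIntegrable 1 0 ((b:ℝ)/a) (((b*k:ℕ):ℝ)/a) 0 1
    simp only [one_mul, add_zero] at h
    have hfun : (fun u : ℝ => sawtooth u * sawtooth ((b:ℝ)/a * u + ((b*k:ℕ):ℝ)/a))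
        = fun t : ℝ => sawtooth t * sawtooth (((b:ℝ) * t + ((b*k:ℕ):ℝ)) / a) := by
      funext t
      rw [harg t]
    rwa [hfun] at h
  have hsum : ∀ t : ℝ, (∑ k ∈ Finset.range a,
        sawtooth t * sawtooth (((b:ℝ) * t + ((b*k:ℕ):ℝ)) / a))
      = sawtooth t * sawtooth ((b:ℝ) * t) := by
    intro t
    rw [← Finset.mul_sum]
    congr 1
    calc ∑ k ∈ Finset.range a, sawtooth (((b:ℝ) * t + ((b*k:ℕ):ℝ)) / a)
        = ∑ k ∈ Finset.range a, sawtooth (((b:ℝ) * t + (k:ℝ)) / a) :=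
          sum_sawtooth_bmul a b ha hab ((b:ℝ) * t)
      _ = sawtooth ((b:ℝ) * t) := sawtooth_dist a ha _
  calc (∫ u in (0:ℝ)..1, g u)
      = ∑ k ∈ Finset.range a, ∫ u in ((k : ℝ)/a)..(((k+1 : ℕ) : ℝ)/a), g u := hsplit
    _ = ∑ k ∈ Finset.range a, (1/(a:ℝ)) *
          ∫ t in (0:ℝ)..1, sawtooth t * sawtooth (((b:ℝ) * t + ((b*k:ℕ):ℝ)) / a) :=
        Finset.sum_congr rfl fun k _ => piece k
    _ = (1/(a:ℝ)) * ∑ k ∈ Finset.range a,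
          ∫ t in (0:ℝ)..1, sawtooth t * sawtooth (((b:ℝ) * t + ((b*k:ℕ):ℝ)) / a) := by
        rw [Finset.mul_sum]
    _ = (1/(a:ℝ)) * ∫ t in (0:ℝ)..1, ∑ k ∈ Finset.range a,
          sawtooth t * sawtooth (((b:ℝ) * t + ((b*k:ℕ):ℝ)) / a) := by
        rw [intervalIntegral.integral_finset_sum hintk]
    _ = (1/(a:ℝ)) * ∫ t in (0:ℝ)..1, sawtooth t * sawtooth ((b:ℝ) * t) := by
        congr 1
        exact intervalIntegral.integral_congr fun t _ => hsum t

lemma integral_sawtooth_sq : (∫ u in (0:ℝ)..1, sawtooth u * sawtooth u) = 1/12 := by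
  have hcong : (∫ u in (0:ℝ)..1, sawtooth u * sawtooth u)
      = ∫ u in (0:ℝ)..1, (u - 1/2) * (u - 1/2) := by
    apply intervalIntegral.integral_congr_ae
    have h1 : ∀ᵐ x : ℝ, x ≠ 1 := by
      have h0 : volume ({1} : Set ℝ) = 0 := measure_singleton 1
      rw [MeasureTheory.ae_iff]
      convert h0 using 2
      ext x
      simp
    filter_upwards [h1] with x hx hmem
    rw [Set.uIoc_of_le (by norm_num : (0:ℝ) ≤ 1)] at hmem
    have hfr : Int.fract x = x :=
      Int.fract_eq_self.mpr ⟨le_of_lt hmem.1, lt_of_le_of_ne hmem.2 hx⟩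
    simp [sawtooth, hfr]
  rw [hcong]
  have h2 := intervalIntegral.integral_comp_sub_right (a := (0:ℝ)) (b := 1)
    (fun x : ℝ => x * x) (1/2)
  rw [h2]
  have h3 : (∫ x in ((0:ℝ)-1/2)..(1-1/2), x * x) = ∫ x in ((0:ℝ)-1/2)..(1-1/2), x ^ 2 :=
    intervalIntegral.integral_congr fun x _ => (sq x).symm
  rw [h3, integral_pow]
  norm_num

lemma integral_saw_mul (b : ℕ) (hb : 0 < b) :
    (∫ u in (0:ℝ)..1, sawtooth u * sawtooth ((b:ℝ) * u)) = 1/(12*b) := by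
  have h := coprime_reduce b 1 hb (Nat.coprime_one_left b)
  simp only [Nat.cast_one, one_mul] at h
  rw [integral_sawtooth_sq] at h
  calc (∫ u in (0:ℝ)..1, sawtooth u * sawtooth ((b:ℝ) * u))
      = ∫ u in (0:ℝ)..1, sawtooth ((b:ℝ) * u) * sawtooth u :=
        intervalIntegral.integral_congr fun u _ => mul_comm _ _
    _ = 1 / b * (1/12) := h
    _ = 1/(12*b) := by ring

lemma coprime_case (a b : ℕ) (ha : 0 < a) (hb : 0 < b) (hab : Nat.Coprime a b) :
    (∫ u in (0:ℝ)..1, sawtooth ((a:ℝ) * u) * sawtooth ((b:ℝ) * u)) = 1/(12*a*b) := by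
  rw [coprime_reduce a b ha hab.symm, integral_saw_mul b hb]
  ring

/-- `∫₀¹ f(q₁u) f(q₂u) du = gcd(q₁,q₂)² / (12 q₁ q₂)`. -/
theorem integral_sawtooth_mul (q₁ q₂ : ℕ) (h₁ : 0 < q₁) (h₂ : 0 < q₂) :
    ∫ u in (0:ℝ)..1, sawtooth (q₁ * u) * sawtooth (q₂ * u) =
      (Nat.gcd q₁ q₂ : ℝ) ^ 2 / (12 * q₁ * q₂) := by
  set d := Nat.gcd q₁ q₂ with hd
  have hd0 : 0 < d := Nat.gcd_pos_of_pos_left _ h₁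
  set A := q₁ / d with hA'
  set B := q₂ / d with hB'
  have hA : d * A = q₁ := Nat.mul_div_cancel' (Nat.gcd_dvd_left _ _)
  have hB : d * B = q₂ := Nat.mul_div_cancel' (Nat.gcd_dvd_right _ _)
  have hA0 : 0 < A := by
    rcases Nat.eq_zero_or_pos A with h | h
    · rw [h, Nat.mul_zero] at hA; omega
    · exact h
  have hB0 : 0 < B := by
    rcases Nat.eq_zero_or_pos B with h | h
    · rw [h, Nat.mul_zero] at hB; omega
    · exact h
  have hcop : Nat.Coprime A B := Nat.coprime_div_gcd_div_gcd hd0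
  have hdR : (d : ℝ) ≠ 0 := Nat.cast_ne_zero.mpr hd0.ne'
  have hAR : (A : ℝ) ≠ 0 := Nat.cast_ne_zero.mpr hA0.ne'
  have hBR : (B : ℝ) ≠ 0 := Nat.cast_ne_zero.mpr hB0.ne'
  set g : ℝ → ℝ := fun t => sawtooth ((A:ℝ) * t) * sawtooth ((B:ℝ) * t) with hg
  have hq1 : (q₁ : ℝ) = (d : ℝ) * A := by exact_mod_cast congrArg (fun n : ℕ => (n : ℝ)) hA.symm
  have hq2 : (q₂ : ℝ) = (d : ℝ) * B := by exact_mod_cast congrArg (fun n : ℕ => (n : ℝ)) hB.symm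
  have hcomp : ∀ u : ℝ, sawtooth ((q₁:ℝ) * u) * sawtooth ((q₂:ℝ) * u) = g ((d:ℝ) * u) := by
    intro u
    rw [hg]
    simp only [hq1, hq2]
    ring_nf
  have gper : Function.Periodic g 1 := by
    intro t
    rw [hg]
    simp only []
    have e1 : (A:ℝ) * (t + 1) = (A:ℝ) * t + ((A:ℤ) : ℝ) := by push_cast; ring
    have e2 : (B:ℝ) * (t + 1) = (B:ℝ) * t + ((B:ℤ) : ℝ) := by push_cast; ring
    rw [e1, e2, sawtooth_add_int, sawtooth_add_int]
  have hint : ∀ t₁ t₂ : ℝ, IntervalIntegrable g volume t₁ t₂ := fun t1 t2 => by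
    simpa [hg] using sawtooth_intervalIntegrable A 0 B 0 t1 t2
  have hdper : (∫ x in (0:ℝ)..(d:ℝ), g x) = (d : ℝ) * ∫ x in (0:ℝ)..1, g x := by
    have h := gper.intervalIntegral_add_zsmul_eq (d : ℤ) 0 hint
    have e : (0:ℝ) + (d : ℤ) • (1:ℝ) = (d : ℝ) := by
      rw [zsmul_eq_mul]; push_cast; ring
    rw [e, zero_add, zsmul_eq_mul] at h
    rw [h]
    push_cast
    ring
  calc (∫ u in (0:ℝ)..1, sawtooth ((q₁:ℝ) * u) * sawtooth ((q₂:ℝ) * u))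
      = ∫ u in (0:ℝ)..1, g ((d:ℝ) * u) :=
        intervalIntegral.integral_congr fun u _ => hcomp u
    _ = (d:ℝ)⁻¹ • ∫ x in ((d:ℝ)*0)..((d:ℝ)*1), g x :=
        intervalIntegral.integral_comp_mul_left g hdR
    _ = (d:ℝ)⁻¹ * ∫ x in (0:ℝ)..(d:ℝ), g x := by norm_num
    _ = (d:ℝ)⁻¹ * ((d:ℝ) * (1/(12 * A * B))) := by
        rw [hdper, coprime_case A B hA0 hB0 hcop]
    _ = (d : ℝ) ^ 2 / (12 * q₁ * q₂) := by
        rw [hq1, hq2]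
        field_simp
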